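/- Let K_n^{n_1,...,n_k} be the graph consisting of a universal vertex v joined to a disjoint union of cliques of sizes n_1,...,n_k, where n = 1 + Σ n_i and k ≥ 2. Its distance characteristic polynomial is (λ+1)^{n-k-1} · (λ - Σ_{i=1}^k n_i(2λ+1)/(λ+n_i+1)) · ∏_{i=1}^k (λ+n_i+1). -/

import Mathlib

open Polynomial

/-- The distance matrix of the graph consisting of a universal vertex (`none`)
joined to the disjoint union of cliques of sizes `n 0, ..., n (k-1)`
(vertices `some ⟨i, a⟩`). -/
def DKcliques (k : ℕ) (n : Fin k → ℕ) :
    Matrix (Option ((i : Fin k) × Fin (n i))) (Option ((i : Fin k) × Fin (n i))) ℝ :=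
  fun x y =>
    match x, y with
    | none, none => 0
    | none, some _ => 1
    | some _, none => 1
    | some ⟨i, a⟩, some ⟨j, b⟩ =>
        if h : i = j then (if h ▸ a = b then 0 else 1) else 2

/-!
Write `c = λ + 1` and `J` for all-ones matrices. On the clique vertices, `λ - D` is
`A - 2J`, where `A` is block diagonal with blocks `c • 1 + J` of size `n i`. Taking the Schur
complement of the universal vertex (for `λ ≠ 0`) leaves `A - (2 + λ⁻¹) J`, a rank-one
perturbation of `A`. The matrix determinant lemma evaluates it, since `A⁻¹ 1` is the vector
equal to `(c + n i)⁻¹` on the `i`-th clique and `det A = ∏ c ^ (n i - 1) (c + n i)`.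
This proves the formula for all `λ` outside a finite set; both sides are continuous on the
open set where `λ + n i + 1 ≠ 0`, so it holds there.
-/

open Matrix Finset

namespace Matrix

theorem det_blockDiagonal' {R o : Type*} [CommRing R] [Fintype o] [DecidableEq o]
    {m : o → Type*} [∀ i, Fintype (m i)] [∀ i, DecidableEq (m i)]
    (M : ∀ i, Matrix (m i) (m i) R) :
    (blockDiagonal' M).det = ∏ i, (M i).det := by
  let : LinearOrder o := LinearOrder.lift' _ (Fintype.equivFin o).injective
  rw [(blockTriangular_blockDiagonal' M).det_fintype]
  refine prod_congr rfl fun i _ => ?_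
  have hblock : (blockDiagonal' M).toSquareBlock Sigma.fst i
      = (M i).submatrix (Equiv.sigmaSubtype i) (Equiv.sigmaSubtype i) := by
    ext ⟨⟨j, a⟩, hj⟩ ⟨⟨j', b⟩, hj'⟩
    dsimp only at hj hj'
    subst hj hj'
    simp [toSquareBlock_def, blockDiagonal'_apply_eq]
  rw [hblock, det_submatrix_equiv_self]

variable {ι : Type*} [Fintype ι] [DecidableEq ι]

theorem det_add_const_of_mulVec_eq_one {R : Type*} [CommRing R] {A : Matrix ι ι R}
    (hA : IsUnit A.det) {w : ι → R} (hw : A *ᵥ w = 1) (t : R) :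
    (A + of fun _ _ => t).det = A.det * (1 + t * ∑ i, w i) := by
  have hJ : (of fun _ _ => t : Matrix ι ι R)
      = (replicateCol Unit (t • 1 : ι → R) * replicateRow Unit (1 : ι → R) : Matrix ι ι R) := by
    ext
    simp [Matrix.mul_apply]
  have hinv : A⁻¹ *ᵥ (t • 1) = t • w := by
    rw [← hw, mulVec_smul, mulVec_mulVec, nonsing_inv_mul _ hA, one_mulVec]
  rw [hJ, det_add_replicateCol_mul_replicateRow hA, Matrix.mul_assoc, ← replicateCol_mulVec,
    hinv, replicateRow_mul_replicateCol, det_unique (n := Unit)]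
  simp [mul_sum, dotProduct]

theorem det_smul_one_add_const_one {K : Type*} [Field K] [Nonempty ι] {c : K} (hc : c ≠ 0) :
    (c • 1 + of fun _ _ : ι => (1 : K)).det
      = c ^ (Fintype.card ι - 1) * (c + Fintype.card ι) := by
  have hw : (c • 1 : Matrix ι ι K) *ᵥ (fun _ => c⁻¹) = 1 := by
    ext
    simp [smul_mulVec, hc]
  obtain ⟨m, hm⟩ := Nat.exists_eq_add_one.mpr (Fintype.card_pos (α := ι))
  rw [det_add_const_of_mulVec_eq_one (by simp [hc]) hw, det_smul, det_one, sum_const, card_univ,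
    hm, nsmul_eq_mul, Nat.add_sub_cancel, pow_succ]
  push_cast
  field_simp

end Matrix

theorem Set.EqOn.of_eqOn_diff_finite {𝕜 X : Type*} [NontriviallyNormedField 𝕜] [CompleteSpace 𝕜]
    [TopologicalSpace X] [T2Space X] {f g : 𝕜 → X} {s t : Set 𝕜} (hs : IsOpen s)
    (ht : t.Finite) (hf : ContinuousOn f s) (hg : ContinuousOn g s) (h : EqOn f g (s \ t)) :
    EqOn f g s :=
  h.of_subset_closure hf hg sdiff_subset
    ((ht.countable.dense_compl 𝕜).open_subset_closure_inter hs)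

section Cliques

variable {k : ℕ} (n : Fin k → ℕ)

noncomputable def cliqueBlocks {K : Type*} [Field K] (c : K) :
    Matrix ((i : Fin k) × Fin (n i)) ((i : Fin k) × Fin (n i)) K :=
  blockDiagonal' fun _ => c • 1 + of fun _ _ => 1

theorem cliqueBlocks_mulVec {K : Type*} [Field K] {c : K} (hc : ∀ i, c + n i ≠ 0) :
    cliqueBlocks n c *ᵥ (fun x => (c + n x.1)⁻¹) = 1 := by
  ext ⟨i, _⟩
  rw [mulVec, dotProduct, Fintype.sum_sigma, sum_eq_single i]
  · simp only [cliqueBlocks, blockDiagonal'_apply_eq, Matrix.add_apply, Matrix.smul_apply,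
      Matrix.one_apply, smul_eq_mul, mul_ite, mul_one, mul_zero, of_apply, Pi.one_apply]
    rw [← sum_mul, sum_add_distrib, sum_ite_eq, sum_const, card_univ, Fintype.card_fin,
      nsmul_one]
    simpa using mul_inv_cancel₀ (hc i)
  · intro j _ hji
    exact sum_eq_zero fun b _ => by
      simp [cliqueBlocks, blockDiagonal'_apply_ne _ _ _ (Ne.symm hji)]
  · simp

theorem det_cliqueBlocks {K : Type*} [Field K] (hn : ∀ i, 1 ≤ n i) {c : K} (hc : c ≠ 0) :
    (cliqueBlocks n c).det = c ^ (∑ i, n i - k) * ∏ i, (c + n i) := by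
  have hblock (i : Fin k) : (c • 1 + of fun _ _ : Fin (n i) => (1 : K)).det
      = c ^ (n i - 1) * (c + n i) := by
    have : Nonempty (Fin (n i)) := ⟨⟨0, hn i⟩⟩
    simpa using det_smul_one_add_const_one (ι := Fin (n i)) hc
  have hexp : ∑ i, (n i - 1) = ∑ i, n i - k := by
    simpa using sum_tsub_distrib univ fun i _ => hn i
  rw [cliqueBlocks, det_blockDiagonal', prod_congr rfl fun i _ => hblock i, prod_mul_distrib,
    prod_pow_eq_pow_sum, hexp]

theorem scalar_sub_DKcliques_eq_fromBlocks (lam : ℝ) :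
    scalar _ lam - DKcliques k n
      = (fromBlocks (cliqueBlocks n (lam + 1) + of fun _ _ => -2) (of fun _ _ => -1)
          (of fun _ _ => -1) (scalar Unit lam)).submatrix
        (Equiv.optionEquivSumPUnit _) (Equiv.optionEquivSumPUnit _) := by
  ext (_ | ⟨i, a⟩) (_ | ⟨j, b⟩)
  · simp [DKcliques]
  · simp [DKcliques]
  · simp [DKcliques]
  · rcases eq_or_ne i j with rfl | hij
    · rcases eq_or_ne a b with rfl | hab
      · simp only [scalar_apply, Matrix.sub_apply, diagonal_apply_eq, DKcliques, ↓reduceDIte,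
          ↓reduceIte, sub_zero, cliqueBlocks, submatrix_apply, Equiv.optionEquivSumPUnit_some,
          fromBlocks_apply₁₁, Matrix.add_apply, blockDiagonal'_apply_eq, Matrix.smul_apply,
          one_apply_eq, smul_eq_mul, mul_one, of_apply]
        ring
      · norm_num [DKcliques, cliqueBlocks, blockDiagonal'_apply_eq, hab]
    · simp [DKcliques, cliqueBlocks, blockDiagonal'_apply_ne _ _ _ hij, hij]

theorem det_scalar_sub_DKcliques (hn : ∀ i, 1 ≤ n i) {lam : ℝ} (h0 : lam ≠ 0)
    (h1 : lam + 1 ≠ 0) (hlam : ∀ i, lam + n i + 1 ≠ 0) :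
    (scalar _ lam - DKcliques k n).det
      = (lam + 1) ^ (∑ i, n i - k)
          * (lam - ∑ i, (n i : ℝ) * (2 * lam + 1) / (lam + n i + 1))
          * ∏ i, (lam + n i + 1) := by
  let : Invertible (scalar Unit lam) :=
    invertibleOfRightInverse _ (scalar Unit lam⁻¹) (by simp [h0])
  have hinv : ⅟(scalar Unit lam) = scalar Unit lam⁻¹ := rfl
  have hschur : cliqueBlocks n (lam + 1) + (of fun _ _ => -2)
        - (of fun _ _ => -1 : Matrix _ Unit ℝ) * ⅟(scalar Unit lam)
          * (of fun _ _ => -1 : Matrix Unit _ ℝ)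
      = cliqueBlocks n (lam + 1) + of fun _ _ => -(2 + lam⁻¹) := by
    ext
    rw [hinv]
    simp only [scalar_apply, Matrix.sub_apply, Matrix.add_apply, of_apply, Matrix.mul_apply,
      univ_unique, PUnit.default_eq_unit, diagonal_apply_eq, neg_mul, one_mul, sum_neg_distrib,
      sum_const, card_singleton, one_smul, mul_neg, mul_one, neg_neg, neg_add_rev]
    ring
  have hc (i : Fin k) : lam + 1 + n i ≠ 0 := by rw [add_right_comm]; exact hlam i
  have hdet := det_cliqueBlocks n hn h1
  have hunit : IsUnit (cliqueBlocks n (lam + 1)).det := by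
    rw [hdet]
    exact (mul_ne_zero (pow_ne_zero _ h1) (prod_ne_zero_iff.mpr fun i _ => hc i)).isUnit
  rw [scalar_sub_DKcliques_eq_fromBlocks, det_submatrix_equiv_self, det_fromBlocks₂₂, hschur,
    det_add_const_of_mulVec_eq_one hunit (cliqueBlocks_mulVec n hc), hdet]
  have hsum : ∑ x : (i : Fin k) × Fin (n i), (lam + 1 + n x.1)⁻¹
      = ∑ i, (n i : ℝ) * (lam + n i + 1)⁻¹ := by
    simp [Fintype.sum_sigma, add_right_comm]
  have hfrac : ∑ i, (n i : ℝ) * (2 * lam + 1) / (lam + n i + 1)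
      = (2 * lam + 1) * ∑ i, (n i : ℝ) * (lam + n i + 1)⁻¹ := by
    rw [mul_sum]
    exact sum_congr rfl fun i _ => by ring
  rw [hsum, hfrac, det_unique (n := Unit), scalar_apply, diagonal_apply_eq]
  simp only [add_right_comm lam 1]
  field_simp
  ring

end Cliques

theorem charpoly_universal_vertex_cliques_general {k : ℕ}
    (n : Fin k → ℕ) (hn : ∀ i, 1 ≤ n i) {N : ℕ} (hN : N = 1 + ∑ i, n i) :
    ∀ lam : ℝ, (∀ i, lam + n i + 1 ≠ 0) →
      ((DKcliques k n).charpoly).eval lam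
        = (lam + 1) ^ (N - k - 1)
            * (lam - ∑ i, (n i : ℝ) * (2 * lam + 1) / (lam + n i + 1))
            * ∏ i, (lam + n i + 1) := by
  have hexp : N - k - 1 = ∑ i, n i - k := by omega
  have hopen : IsOpen {x : ℝ | ∀ i, x + n i + 1 ≠ 0} := by
    simp only [Set.ofPred_forall]
    exact isOpen_iInter_of_finite fun i => isOpen_ne_fun (by fun_prop) continuous_const
  rw [hexp]
  refine Set.EqOn.of_eqOn_diff_finite hopen (Set.toFinite {0, -1}) (by fun_prop) ?_ ?_
  · fun_prop (disch := intro x hx; apply hx)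
  · rintro x ⟨hx, hx'⟩
    simp only [Set.mem_insert_iff, Set.mem_singleton_iff, not_or] at hx'
    exact (eval_charpoly _ x).trans (det_scalar_sub_DKcliques n hn hx'.1 (by grind) hx)

theorem charpoly_universal_vertex_cliques {k : ℕ} (hk : 2 ≤ k)
    (n : Fin k → ℕ) (hn : ∀ i, 1 ≤ n i) {N : ℕ} (hN : N = 1 + ∑ i, n i) :
    ∀ lam : ℝ, (∀ i, lam + n i + 1 ≠ 0) →
      ((DKcliques k n).charpoly).eval lam
        = (lam + 1) ^ (N - k - 1)
            * (lam - ∑ i, (n i : ℝ) * (2 * lam + 1) / (lam + n i + 1))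
            * ∏ i, (lam + n i + 1) :=
  charpoly_universal_vertex_cliques_general n hn hN
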